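/- Existence of the extremal solution: Under the standing assumptions, let f ∈ C¹([0,∞)) be strictly convex, increasing, with f(0) > 0 and lim_{s→∞} f(s)/s = +∞, and let λ* be the extremal parameter of (P(λf)). Then the problem (P(λ* f)) admits a bounded minimal solution u* (the extremal solution). -/

import Mathlib

open MeasureTheory Set

/-- The `m`-boundary of a set `Ω`. -/
def mBoundary {X : Type*} [MeasurableSpace X] (m : X → MeasureTheory.Measure X)
    (Ω : Set X) : Set X :=
  {x | x ∉ Ω ∧ 0 < m x Ω}

/-- The `m`-closure of a set `Ω`. -/
def mClosure {X : Type*} [MeasurableSpace X] (m : X → MeasureTheory.Measure X)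
    (Ω : Set X) : Set X :=
  Ω ∪ mBoundary m Ω

/-- The nonlocal `m`-Laplacian. -/
noncomputable def deltaM {X : Type*} [MeasurableSpace X] (m : X → MeasureTheory.Measure X)
    (u : X → ℝ) (x : X) : ℝ :=
  ∫ y, (u y - u x) ∂(m x)

/-- `m` is a random walk: each `m x` is a probability measure and `x ↦ m x A` is measurable. -/
def IsRandomWalk {X : Type*} [MeasurableSpace X] (m : X → MeasureTheory.Measure X) : Prop :=
  (∀ x, IsProbabilityMeasure (m x)) ∧
    ∀ A : Set X, MeasurableSet A → Measurable fun x => m x A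

/-- `ν` is reversible with respect to the random walk `m`. -/
def Reversible {X : Type*} [MeasurableSpace X] (m : X → MeasureTheory.Measure X)
    (ν : MeasureTheory.Measure X) : Prop :=
  ∀ F : X → X → ℝ, Measurable (Function.uncurry F) → (∃ C, ∀ x y, |F x y| ≤ C) →
    ∫ x, (∫ y, F x y ∂(m x)) ∂ν = ∫ x, (∫ y, F y x ∂(m x)) ∂ν

/-- `Ω` is `m`-connected with respect to `ν`. -/
def mConnected {X : Type*} [MeasurableSpace X] (m : X → MeasureTheory.Measure X)
    (ν : MeasureTheory.Measure X) (Ω : Set X) : Prop :=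
  ∀ A B : Set X, MeasurableSet A → MeasurableSet B → A ⊆ Ω → B ⊆ Ω → A ∪ B = Ω →
    ν A ≠ 0 → ν B ≠ 0 → 0 < ∫ x in A, (m x B).toReal ∂ν

/-- Membership in `L²₀(Ω_m, ν)`: square integrable on `Ω_m`, vanishing `ν`-a.e. on the
`m`-boundary, extended by `0` outside `Ω_m`. -/
def MemL20 {X : Type*} [MeasurableSpace X] (m : X → MeasureTheory.Measure X)
    (ν : MeasureTheory.Measure X) (Ω : Set X) (u : X → ℝ) : Prop :=
  Measurable u ∧ MeasureTheory.MemLp u 2 (ν.restrict (mClosure m Ω)) ∧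
    (∀ᵐ x ∂(ν.restrict (mBoundary m Ω)), u x = 0) ∧ ∀ x ∉ mClosure m Ω, u x = 0

/-- The nonlocal Dirichlet energy `(1/2)∬_{Ω_m×Ω_m} |u(y)-u(x)|² dm_x(y) dν(x)`. -/
noncomputable def gradEnergy {X : Type*} [MeasurableSpace X] (m : X → MeasureTheory.Measure X)
    (ν : MeasureTheory.Measure X) (Ω : Set X) (u : X → ℝ) : ℝ :=
  (1 / 2) * ∫ x in mClosure m Ω, (∫ y in mClosure m Ω, (u y - u x) ^ 2 ∂(m x)) ∂ν

/-- The standing assumptions of the paper: reversible random walk space, `Ω` `m`-connected with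
`0 < ν(Ω) < ν(Ω_m) < ∞`, a 2-Poincaré inequality with first eigenvalue `lam = λ_m(Ω)` attained
by an eigenfunction `φ` with `0 < α ≤ φ ≤ M` a.e. on `Ω` and `φ = 0` on `∂_mΩ`. -/
structure Standing {X : Type*} [MeasurableSpace X] (m : X → MeasureTheory.Measure X)
    (ν : MeasureTheory.Measure X) (Ω : Set X) (lam : ℝ) (φ : X → ℝ) (α M : ℝ) : Prop where
  hrw : IsRandomWalk m
  hrev : Reversible m ν
  hsigma : MeasureTheory.SigmaFinite ν
  hmeasΩ : MeasurableSet Ω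
  hconn : mConnected m ν Ω
  hpos : 0 < ν Ω
  hlt : ν Ω < ν (mClosure m Ω)
  hfin : ν (mClosure m Ω) < ⊤
  hlamPos : 0 < lam
  hpoincare : ∀ u : X → ℝ, MemL20 m ν Ω u →
    lam * ∫ x in Ω, u x ^ 2 ∂ν ≤ gradEnergy m ν Ω u
  hphiMem : MemL20 m ν Ω φ
  heig : ∀ᵐ x ∂(ν.restrict Ω), -(deltaM m φ x) = lam * φ x
  halphaPos : 0 < α
  halphaM : α ≤ M
  hphiLB : ∀ᵐ x ∂(ν.restrict Ω), α ≤ φ x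
  hphiUB : ∀ᵐ x ∂(ν.restrict Ω), φ x ≤ M

/-- Essential boundedness on a set `S` with respect to `ν`. -/
def IsBdd {X : Type*} [MeasurableSpace X] (ν : MeasureTheory.Measure X) (S : Set X)
    (u : X → ℝ) : Prop :=
  ∃ C : ℝ, ∀ᵐ x ∂(ν.restrict S), |u x| ≤ C

/-- A (nonnegative) solution of the Gelfand-type problem `(P(λ f))`. -/
def IsSol {X : Type*} [MeasurableSpace X] (m : X → MeasureTheory.Measure X)
    (ν : MeasureTheory.Measure X) (Ω : Set X) (lam : ℝ) (f : ℝ → ℝ) (u : X → ℝ) : Prop :=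
  MemL20 m ν Ω u ∧ (∀ᵐ x ∂(ν.restrict (mClosure m Ω)), 0 ≤ u x) ∧
    ∀ᵐ x ∂(ν.restrict Ω), -(deltaM m u x) = lam * f (u x)

/-- A solution of `(P(λ f))` without a sign constraint. -/
def IsSolNS {X : Type*} [MeasurableSpace X] (m : X → MeasureTheory.Measure X)
    (ν : MeasureTheory.Measure X) (Ω : Set X) (lam : ℝ) (f : ℝ → ℝ) (u : X → ℝ) : Prop :=
  MemL20 m ν Ω u ∧ ∀ᵐ x ∂(ν.restrict Ω), -(deltaM m u x) = lam * f (u x)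

/-- A minimal solution of `(P(λ f))`. -/
def IsMinimalSol {X : Type*} [MeasurableSpace X] (m : X → MeasureTheory.Measure X)
    (ν : MeasureTheory.Measure X) (Ω : Set X) (lam : ℝ) (f : ℝ → ℝ) (u : X → ℝ) : Prop :=
  IsSol m ν Ω lam f u ∧
    ∀ v : X → ℝ, IsSol m ν Ω lam f v → ∀ᵐ x ∂(ν.restrict (mClosure m Ω)), u x ≤ v x

/-- The extremal parameter `λ*`. -/
noncomputable def lamStar {X : Type*} [MeasurableSpace X] (m : X → MeasureTheory.Measure X)
    (ν : MeasureTheory.Measure X) (Ω : Set X) (f : ℝ → ℝ) : ℝ :=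
  sSup {lam : ℝ | 0 ≤ lam ∧ ∃ u : X → ℝ, IsSol m ν Ω lam f u ∧ IsBdd ν (mClosure m Ω) u}

/-- Hypotheses (H) on the nonlinearity `f` with constant `c₁`. -/
def HypH (f : ℝ → ℝ) (c₁ : ℝ) : Prop :=
  ContinuousOn f (Set.Ici 0) ∧ MonotoneOn f (Set.Ici 0) ∧ 0 < f 0 ∧ 0 < c₁ ∧
    ∀ s : ℝ, 0 ≤ s → c₁ * s ≤ f s

/-- The stability quadratic form `Q_u(v)` with linearized potential `fp ∘ u` (where `fp = f'`). -/
noncomputable def Qform {X : Type*} [MeasurableSpace X] (m : X → MeasureTheory.Measure X)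
    (ν : MeasureTheory.Measure X) (Ω : Set X) (lam : ℝ) (fp : ℝ → ℝ) (u v : X → ℝ) : ℝ :=
  gradEnergy m ν Ω v - lam * ∫ x in Ω, fp (u x) * v x ^ 2 ∂ν

/-- Stability of a solution: `Q_u(v) ≥ 0` for all test functions `v ∈ L^∞ ∩ L²₀`. -/
def IsStable {X : Type*} [MeasurableSpace X] (m : X → MeasureTheory.Measure X)
    (ν : MeasureTheory.Measure X) (Ω : Set X) (lam : ℝ) (fp : ℝ → ℝ) (u : X → ℝ) : Prop :=
  ∀ v : X → ℝ, MemL20 m ν Ω v → IsBdd ν (mClosure m Ω) v → 0 ≤ Qform m ν Ω lam fp u v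

/-- The first eigenvalue `μ₁(u)` of the linearized operator, as an infimum of `Q_u` over
normalized test functions. -/
noncomputable def mu1 {X : Type*} [MeasurableSpace X] (m : X → MeasureTheory.Measure X)
    (ν : MeasureTheory.Measure X) (Ω : Set X) (lam : ℝ) (fp : ℝ → ℝ) (u : X → ℝ) : ℝ :=
  sInf {r : ℝ | ∃ v : X → ℝ, MemL20 m ν Ω v ∧ (∫ x in Ω, v x ^ 2 ∂ν) = 1 ∧
    r = Qform m ν Ω lam fp u v}

/-! Solutions of `(P(λf))` are the fixed points on `Ω` of `u ↦ ∫ u dm_x + λ f(u(x))`, a monotone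
map, so Picard iteration from `0` below a supersolution increases to the minimal solution; that
`ν`-a.e. statements become `m_x`-a.e. ones for `ν`-a.e. `x ∈ Ω` is where reversibility enters.
A solution satisfies `u(x) ≥ λ f(u(x))`, so superlinearity of `f` bounds all solutions with
`λ ≥ λ*/2` by one constant `s₀`. For `λₙ ↑ λ*`, a solution at a parameter above `λₙ` is a bounded
supersolution at `λₙ`, so the minimal solutions `uₙ` exist, are bounded by `s₀`, increase in `n`
and lie below every solution at `λ*`. By dominated convergence their limit solves `(P(λ* f))`,
and it is then the minimal solution. -/

open Filter Topology

section RandomWalk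

variable {X : Type*} [MeasurableSpace X] {m : X → Measure X} {ν : Measure X} {Ω : Set X}

lemma IsRandomWalk.measurable (hrw : IsRandomWalk m) : Measurable m :=
  Measure.measurable_of_measurable_coe m hrw.2

lemma measurable_integral_of_measurable (hm : Measurable m) {u : X → ℝ} (hu : Measurable u) :
    Measurable fun x => ∫ y, u y ∂m x :=
  (StronglyMeasurable.integral_kernel (κ := ⟨m, hm⟩) hu.stronglyMeasurable).measurable

lemma IsRandomWalk.measurableSet_mBoundary (hrw : IsRandomWalk m) (hΩ : MeasurableSet Ω) :
    MeasurableSet (mBoundary m Ω) :=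
  hΩ.compl.inter (measurableSet_lt measurable_const (hrw.2 Ω hΩ))

lemma IsRandomWalk.measurableSet_mClosure (hrw : IsRandomWalk m) (hΩ : MeasurableSet Ω) :
    MeasurableSet (mClosure m Ω) :=
  hΩ.union (hrw.measurableSet_mBoundary hΩ)

/-- Weaker than `∀ᵐ x ∂ν.restrict Ω, m x ≪ ν`: the exceptional set of `x` may depend on `N`. -/
def NullPreservingOn (m : X → Measure X) (ν : Measure X) (Ω : Set X) : Prop :=
  ∀ N : Set X, ν N = 0 → ∀ᵐ x ∂ν.restrict Ω, m x N = 0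

lemma NullPreservingOn.ae_ae (h : NullPreservingOn m ν Ω) {p : X → Prop}
    (hp : ∀ᵐ y ∂ν, p y) : ∀ᵐ x ∂ν.restrict Ω, ∀ᵐ y ∂m x, p y :=
  h _ hp

/-- Reversibility applied to `1_Ω(x) 1_N(y)` turns `∫_Ω m_x(N) dν(x)` into
`∫_N m_x(Ω) dν(x) = 0`. -/
theorem Reversible.nullPreservingOn (hrev : Reversible m ν) (hrw : IsRandomWalk m)
    (hΩ : MeasurableSet Ω) (hΩfin : ν Ω ≠ ⊤) : NullPreservingOn m ν Ω := by
  have := hrw.1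
  intro N hN
  obtain ⟨T, hNT, hT, hT0⟩ := exists_measurable_superset_of_null hN
  have hswap := hrev (fun x y => (Ω ×ˢ T).indicator 1 (x, y))
    (measurable_const.indicator (hΩ.prod hT)) ⟨1, fun x y => by
      by_cases h : (x, y) ∈ Ω ×ˢ T <;> simp [Set.indicator_of_mem, Set.indicator_of_notMem, h]⟩
  simp only [Set.indicator_prod_one, integral_const_mul, integral_mul_const,
    integral_indicator_one hT, integral_indicator_one hΩ] at hswap
  have hright : ∫ x, (m x).real Ω * T.indicator 1 x ∂ν = 0 := by
    refine integral_eq_zero_of_ae ?_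
    filter_upwards [measure_eq_zero_iff_ae_notMem.mp hT0] with x hx
    simp [Set.indicator_of_notMem hx]
  have hleft : ∫ x in Ω, (m x).real T ∂ν = 0 := by
    rw [← integral_indicator hΩ, ← hright, ← hswap]
    congr 1 with x
    by_cases hx : x ∈ Ω <;> simp [hx]
  have hae : (fun x => (m x).real T) =ᵐ[ν.restrict Ω] 0 :=
    (setIntegral_eq_zero_iff_of_nonneg_ae (Eventually.of_forall fun x => measureReal_nonneg)
      (Measure.integrableOn_of_bounded hΩfin
        ((hrw.2 T hT).ennreal_toReal.aestronglyMeasurable) (M := 1)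
        (Eventually.of_forall fun x => by
          rw [Real.norm_of_nonneg measureReal_nonneg]; exact measureReal_le_one))).mp hleft
  filter_upwards [hae] with x hx
  exact measure_mono_null hNT ((measureReal_eq_zero_iff).mp hx)

end RandomWalk

section FixedPoint

variable {X : Type*} [MeasurableSpace X] {m : X → Measure X} {ν : Measure X} {Ω : Set X}
  {c : ℝ} {g : ℝ → ℝ} {C : ℝ}

/-- Where `u` is `m x`-integrable, `-Δ_m u(x) = c g(u(x))` iff `u(x) = gelfandStep m c g u x`. -/
noncomputable def gelfandStep (m : X → Measure X) (c : ℝ) (g : ℝ → ℝ) (u : X → ℝ) (x : X) : ℝ :=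
  ∫ y, u y ∂m x + c * g (u x)

def IsGelfandFixedPt (m : X → Measure X) (ν : Measure X) (Ω : Set X) (c : ℝ) (g : ℝ → ℝ)
    (u : X → ℝ) : Prop :=
  ∀ᵐ x ∂ν.restrict Ω, u x = gelfandStep m c g u x

def IsGelfandSupersol (m : X → Measure X) (ν : Measure X) (Ω : Set X) (c : ℝ) (g : ℝ → ℝ)
    (z : X → ℝ) : Prop :=
  (∀ᵐ x ∂ν, 0 ≤ z x) ∧ ∀ᵐ x ∂ν.restrict Ω, Integrable z (m x) ∧ gelfandStep m c g z x ≤ z x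

structure IsAdmissible (Ω : Set X) (C : ℝ) (u : X → ℝ) : Prop where
  measurable : Measurable u
  nonneg : ∀ x, 0 ≤ u x
  le : ∀ x, u x ≤ C
  eq_zero_of_notMem : ∀ x ∉ Ω, u x = 0

lemma IsAdmissible.abs_le {u : X → ℝ} (hu : IsAdmissible Ω C u) (x : X) : |u x| ≤ C :=
  (abs_of_nonneg (hu.nonneg x)).trans_le (hu.le x)

lemma IsAdmissible.integrable {u : X → ℝ} (hu : IsAdmissible Ω C u) (μ : Measure X)
    [IsFiniteMeasure μ] : Integrable u μ :=
  Integrable.of_bound hu.measurable.aestronglyMeasurable C (Eventually.of_forall hu.abs_le)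

lemma IsAdmissible.iSup {V : ℕ → X → ℝ} (hV : ∀ n, IsAdmissible Ω C (V n)) :
    IsAdmissible Ω C fun x => ⨆ n, V n x where
  measurable := Measurable.iSup fun n => (hV n).measurable
  nonneg x := le_ciSup_of_le ⟨C, by rintro _ ⟨n, rfl⟩; exact (hV n).le x⟩ 0 ((hV 0).nonneg x)
  le x := ciSup_le fun n => (hV n).le x
  eq_zero_of_notMem x hx := by simp only [fun n => (hV n).eq_zero_of_notMem x hx, ciSup_const]

lemma ContinuousOn.measurable_comp_of_nonneg (hg : ContinuousOn g (Ici 0)) {u : X → ℝ}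
    (hu : Measurable u) (h0 : ∀ x, 0 ≤ u x) : Measurable fun x => g (u x) := by
  have hcont : Continuous fun s => g (max s 0) :=
    hg.comp_continuous (continuous_id.max continuous_const) fun s => le_max_right s 0
  convert hcont.measurable.comp hu using 2 with x
  simp [max_eq_left (h0 x)]

lemma gelfandStep_nonneg [∀ x, IsFiniteMeasure (m x)] (hc : 0 ≤ c) {u : X → ℝ}
    (hu : ∀ y, 0 ≤ u y) {x : X} (hg : 0 ≤ g (u x)) : 0 ≤ gelfandStep m c g u x :=
  add_nonneg (integral_nonneg hu) (mul_nonneg hc hg)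

lemma gelfandStep_le_gelfandStep {c' : ℝ} (hc : 0 ≤ c) (hcc' : c ≤ c')
    (hgm : MonotoneOn g (Ici 0)) (hg0 : 0 ≤ g 0) {u v : X → ℝ} {x : X}
    (hu : Integrable u (m x)) (hv : Integrable v (m x)) (huv : u ≤ᵐ[m x] v) (hux : 0 ≤ u x)
    (huvx : u x ≤ v x) : gelfandStep m c g u x ≤ gelfandStep m c' g v x := by
  have hgv : g (u x) ≤ g (v x) := hgm hux (hux.trans huvx) huvx
  have hgv0 : 0 ≤ g (v x) := hg0.trans (hgm self_mem_Ici (hux.trans huvx) (hux.trans huvx))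
  unfold gelfandStep
  gcongr ?_ + ?_
  · exact integral_mono_ae hu hv huv
  · calc c * g (u x) ≤ c * g (v x) := by gcongr
      _ ≤ c' * g (v x) := by gcongr

lemma ae_gelfandStep_le_of_ae_le (hnp : NullPreservingOn m ν Ω) [∀ x, IsFiniteMeasure (m x)]
    (hc : 0 ≤ c) (hgm : MonotoneOn g (Ici 0)) (hg0 : 0 ≤ g 0) {u v : X → ℝ}
    (hu : IsAdmissible Ω C u) (huv : u ≤ᵐ[ν] v) :
    ∀ᵐ x ∂ν.restrict Ω, Integrable v (m x) → gelfandStep m c g u x ≤ gelfandStep m c g v x := by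
  filter_upwards [hnp.ae_ae huv, ae_restrict_of_ae huv] with x hxm hx hv
  exact gelfandStep_le_gelfandStep hc le_rfl hgm hg0 (hu.integrable _) hv hxm (hu.nonneg x) hx

lemma IsGelfandFixedPt.isGelfandSupersol {c' : ℝ} {z : X → ℝ}
    (hz : IsGelfandFixedPt m ν Ω c' g z) (hz0 : ∀ᵐ x ∂ν, 0 ≤ z x)
    (hint : ∀ᵐ x ∂ν.restrict Ω, Integrable z (m x)) (hcc' : c ≤ c')
    (hg : ∀ s, 0 ≤ s → 0 ≤ g s) : IsGelfandSupersol m ν Ω c g z := by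
  refine ⟨hz0, ?_⟩
  filter_upwards [hz, hint, ae_restrict_of_ae hz0] with x hx hxi hx0
  refine ⟨hxi, ?_⟩
  rw [hx, gelfandStep, gelfandStep]
  gcongr
  exact hg _ hx0

lemma ae_le_of_ae_restrict_le (hΩ : MeasurableSet Ω) {u v : X → ℝ}
    (hu : ∀ x ∉ Ω, u x = 0) (hv : ∀ᵐ x ∂ν, 0 ≤ v x) (huv : ∀ᵐ x ∂ν.restrict Ω, u x ≤ v x) :
    u ≤ᵐ[ν] v := by
  filter_upwards [(ae_restrict_iff' hΩ).mp huv, hv] with x hxΩ hx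
  by_cases h : x ∈ Ω
  · exact hxΩ h
  · rw [hu x h]; exact hx

lemma ae_tendsto_iSup {V : ℕ → X → ℝ} (hVC : ∀ n x, V n x ≤ C)
    (hmono : ∀ n, V n ≤ᵐ[ν] V (n + 1)) :
    ∀ᵐ x ∂ν, Tendsto (fun n => V n x) atTop (𝓝 (⨆ n, V n x)) := by
  filter_upwards [ae_all_iff.mpr hmono] with x hx
  exact tendsto_atTop_ciSup (monotone_nat_of_le_succ hx) ⟨C, by rintro _ ⟨n, rfl⟩; exact hVC n x⟩

lemma ae_iSup_le {V : ℕ → X → ℝ} {z : X → ℝ} (h : ∀ n, V n ≤ᵐ[ν] z) :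
    (fun x => ⨆ n, V n x) ≤ᵐ[ν] z := by
  filter_upwards [ae_all_iff.mpr h] with x hx using ciSup_le hx

lemma tendsto_gelfandStep (hnp : NullPreservingOn m ν Ω) [∀ x, IsFiniteMeasure (m x)]
    (hgc : ContinuousOn g (Ici 0)) {c : ℕ → ℝ} {c₀ : ℝ} (hc : Tendsto c atTop (𝓝 c₀))
    {V : ℕ → X → ℝ} (hV : ∀ n, IsAdmissible Ω C (V n)) {W : X → ℝ}
    (hVW : ∀ᵐ x ∂ν, Tendsto (fun n => V n x) atTop (𝓝 (W x))) :
    ∀ᵐ x ∂ν.restrict Ω,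
      Tendsto (fun n => gelfandStep m (c n) g (V n) x) atTop (𝓝 (gelfandStep m c₀ g W x)) := by
  filter_upwards [hnp.ae_ae hVW, ae_restrict_of_ae hVW] with x hxm hx
  have hint : Tendsto (fun n => ∫ y, V n y ∂m x) atTop (𝓝 (∫ y, W y ∂m x)) :=
    tendsto_integral_of_dominated_convergence (fun _ => C)
      (fun n => (hV n).measurable.aestronglyMeasurable) (integrable_const C)
      (fun n => Eventually.of_forall (hV n).abs_le) hxm
  have hg : Tendsto (fun n => g (V n x)) atTop (𝓝 (g (W x))) :=
    (hgc _ (ge_of_tendsto' hx fun n => (hV n).nonneg x)).tendsto.comp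
      (tendsto_nhdsWithin_iff.mpr ⟨hx, Eventually.of_forall fun n => (hV n).nonneg x⟩)
  exact hint.add (hc.mul hg)

lemma isGelfandFixedPt_iSup (hnp : NullPreservingOn m ν Ω) [∀ x, IsFiniteMeasure (m x)]
    (hgc : ContinuousOn g (Ici 0)) {c : ℕ → ℝ} {c₀ : ℝ} (hc : Tendsto c atTop (𝓝 c₀))
    {V : ℕ → X → ℝ} (hV : ∀ n, IsAdmissible Ω C (V n)) (hmono : ∀ n, V n ≤ᵐ[ν] V (n + 1))
    (hfix : ∀ n, IsGelfandFixedPt m ν Ω (c n) g (V n)) :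
    IsGelfandFixedPt m ν Ω c₀ g fun x => ⨆ n, V n x := by
  have hlim := ae_tendsto_iSup (fun n => (hV n).le) hmono
  filter_upwards [ae_restrict_of_ae hlim, tendsto_gelfandStep hnp hgc hc hV hlim,
    ae_all_iff.mpr hfix] with x hx hstep hxfix
  exact tendsto_nhds_unique hx (hstep.congr fun n => (hxfix n).symm)

/-- Truncating at `C` keeps the iterates uniformly bounded; below a supersolution bounded by `C`
the truncation is inactive in the limit. -/
noncomputable def gelfandIter (m : X → Measure X) (Ω : Set X) (c : ℝ) (g : ℝ → ℝ) (C : ℝ) :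
    ℕ → X → ℝ
  | 0 => 0
  | k + 1 => Ω.indicator fun x => min C (gelfandStep m c g (gelfandIter m Ω c g C k) x)

lemma gelfandIter_succ_of_mem {k : ℕ} {x : X} (hx : x ∈ Ω) :
    gelfandIter m Ω c g C (k + 1) x = min C (gelfandStep m c g (gelfandIter m Ω c g C k) x) :=
  Set.indicator_of_mem hx _

lemma isAdmissible_gelfandIter (hm : Measurable m) [∀ x, IsFiniteMeasure (m x)]
    (hΩ : MeasurableSet Ω) (hc : 0 ≤ c) (hgc : ContinuousOn g (Ici 0))
    (hgm : MonotoneOn g (Ici 0)) (hg0 : 0 ≤ g 0) (hC : 0 ≤ C) :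
    ∀ k, IsAdmissible Ω C (gelfandIter m Ω c g C k)
  | 0 => ⟨measurable_const, fun _ => le_rfl, fun _ => hC, fun _ _ => rfl⟩
  | k + 1 => by
    have ih := isAdmissible_gelfandIter hm hΩ hc hgc hgm hg0 hC k
    refine ⟨?_, fun x => ?_, fun x => ?_, fun x hx => Set.indicator_of_notMem hx _⟩
    · have hstep : Measurable (gelfandStep m c g (gelfandIter m Ω c g C k)) :=
        (measurable_integral_of_measurable hm ih.measurable).add
          (measurable_const.mul (hgc.measurable_comp_of_nonneg ih.measurable ih.nonneg))
      exact (measurable_const.min hstep).indicator hΩ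
    · refine Set.indicator_nonneg (fun x _ => le_min hC (gelfandStep_nonneg hc ih.nonneg ?_)) x
      exact hg0.trans (hgm self_mem_Ici (ih.nonneg x) (ih.nonneg x))
    · by_cases hx : x ∈ Ω
      · rw [gelfandIter_succ_of_mem hx]; exact min_le_left _ _
      · rw [gelfandIter, Set.indicator_of_notMem hx]; exact hC

lemma gelfandIter_ae_le (hm : Measurable m) (hnp : NullPreservingOn m ν Ω)
    [∀ x, IsFiniteMeasure (m x)] (hΩ : MeasurableSet Ω) (hc : 0 ≤ c)
    (hgc : ContinuousOn g (Ici 0)) (hgm : MonotoneOn g (Ici 0)) (hg0 : 0 ≤ g 0) (hC : 0 ≤ C)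
    {z : X → ℝ} (hz : IsGelfandSupersol m ν Ω c g z) (k : ℕ) :
    gelfandIter m Ω c g C k ≤ᵐ[ν] z := by
  have hV := isAdmissible_gelfandIter hm hΩ hc hgc hgm hg0 hC
  induction k with
  | zero => exact hz.1
  | succ k ih =>
    refine ae_le_of_ae_restrict_le hΩ (hV (k + 1)).eq_zero_of_notMem hz.1 ?_
    filter_upwards [ae_gelfandStep_le_of_ae_le hnp hc hgm hg0 (hV k) ih, hz.2,
      ae_restrict_mem hΩ] with x hx ⟨hzi, hzx⟩ hxΩ
    rw [gelfandIter_succ_of_mem hxΩ]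
    exact (min_le_right _ _).trans ((hx hzi).trans hzx)

lemma gelfandIter_ae_mono (hm : Measurable m) (hnp : NullPreservingOn m ν Ω)
    [∀ x, IsFiniteMeasure (m x)] (hΩ : MeasurableSet Ω) (hc : 0 ≤ c)
    (hgc : ContinuousOn g (Ici 0)) (hgm : MonotoneOn g (Ici 0)) (hg0 : 0 ≤ g 0) (hC : 0 ≤ C)
    (k : ℕ) : gelfandIter m Ω c g C k ≤ᵐ[ν] gelfandIter m Ω c g C (k + 1) := by
  have hV := isAdmissible_gelfandIter hm hΩ hc hgc hgm hg0 hC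
  induction k with
  | zero => exact Eventually.of_forall (hV 1).nonneg
  | succ k ih =>
    refine ae_le_of_ae_restrict_le hΩ (hV (k + 1)).eq_zero_of_notMem
      (Eventually.of_forall (hV (k + 2)).nonneg) ?_
    filter_upwards [ae_gelfandStep_le_of_ae_le hnp hc hgm hg0 (hV k) ih,
      ae_restrict_mem hΩ] with x hx hxΩ
    rw [gelfandIter_succ_of_mem hxΩ, gelfandIter_succ_of_mem hxΩ]
    exact min_le_min_left C (hx ((hV (k + 1)).integrable _))

theorem exists_minimal_isGelfandFixedPt (hm : Measurable m) (hnp : NullPreservingOn m ν Ω)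
    [∀ x, IsFiniteMeasure (m x)] (hΩ : MeasurableSet Ω) (hc : 0 ≤ c)
    (hgc : ContinuousOn g (Ici 0)) (hgm : MonotoneOn g (Ici 0)) (hg0 : 0 ≤ g 0) (hC : 0 ≤ C)
    {w : X → ℝ} (hw : IsGelfandSupersol m ν Ω c g w) (hwC : ∀ᵐ x ∂ν.restrict Ω, w x ≤ C) :
    ∃ U, IsAdmissible Ω C U ∧ IsGelfandFixedPt m ν Ω c g U ∧
      ∀ z, IsGelfandSupersol m ν Ω c g z → U ≤ᵐ[ν] z := by
  set V := gelfandIter m Ω c g C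
  have hV := isAdmissible_gelfandIter hm hΩ hc hgc hgm hg0 hC
  set U : X → ℝ := fun x => ⨆ k, V k x
  have hmin : ∀ z, IsGelfandSupersol m ν Ω c g z → U ≤ᵐ[ν] z := fun z hz =>
    ae_iSup_le (gelfandIter_ae_le hm hnp hΩ hc hgc hgm hg0 hC hz)
  refine ⟨U, IsAdmissible.iSup hV, ?_, hmin⟩
  have hlim : ∀ᵐ x ∂ν, Tendsto (fun k => V k x) atTop (𝓝 (U x)) :=
    ae_tendsto_iSup (fun k => (hV k).le) (gelfandIter_ae_mono hm hnp hΩ hc hgc hgm hg0 hC)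
  filter_upwards [ae_restrict_of_ae hlim, tendsto_gelfandStep hnp hgc tendsto_const_nhds hV hlim,
    ae_gelfandStep_le_of_ae_le hnp hc hgm hg0 (IsAdmissible.iSup hV) (hmin w hw), hw.2, hwC,
    ae_restrict_mem hΩ] with x hx hstep hUw ⟨hwi, hwx⟩ hwxC hxΩ
  have hsucc : Tendsto (fun k => V (k + 1) x) atTop (𝓝 (min C (gelfandStep m c g U x))) := by
    simp only [V, gelfandIter_succ_of_mem hxΩ]
    exact tendsto_const_nhds.min hstep
  rw [tendsto_nhds_unique (hx.comp (tendsto_add_atTop_nat 1)) hsucc,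
    min_eq_right ((hUw hwi).trans (hwx.trans hwxC))]

end FixedPoint

section Solutions

variable {X : Type*} [MeasurableSpace X] {m : X → Measure X} {ν : Measure X} {Ω : Set X}
  {c : ℝ} {f : ℝ → ℝ} {z : X → ℝ}

lemma deltaM_eq_integral_sub {u : X → ℝ} {x : X} [IsProbabilityMeasure (m x)]
    (hu : Integrable u (m x)) : deltaM m u x = ∫ y, u y ∂m x - u x := by
  simp [deltaM, integral_sub hu (integrable_const (u x))]

lemma integrable_of_deltaM_ne_zero {u : X → ℝ} {x : X} [IsFiniteMeasure (m x)]
    (h : deltaM m u x ≠ 0) : Integrable u (m x) := by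
  refine ((Integrable.of_integral_ne_zero h).add (integrable_const (u x))).congr ?_
  exact ae_of_all _ fun y => sub_add_cancel (u y) (u x)

lemma isSol_zero : IsSol m ν Ω 0 f 0 :=
  ⟨⟨measurable_const, MemLp.zero, ae_of_all _ fun _ => rfl, fun _ _ => rfl⟩,
    ae_of_all _ fun _ => le_rfl, ae_of_all _ fun _ => by simp [deltaM]⟩

lemma isMinimalSol_zero : IsMinimalSol m ν Ω 0 f 0 :=
  ⟨isSol_zero, fun _ hv => hv.2.1⟩

lemma IsSol.nonneg_ae (hcl : MeasurableSet (mClosure m Ω)) (hz : IsSol m ν Ω c f z) :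
    ∀ᵐ x ∂ν, 0 ≤ z x := by
  filter_upwards [(ae_restrict_iff' hcl).mp hz.2.1] with x hx
  by_cases h : x ∈ mClosure m Ω
  · exact hx h
  · rw [hz.1.2.2.2 x h]

/-- The equation forces `Δ_m z(x) ≠ 0`, so `deltaM` is not a junk value and `z` is
`m x`-integrable. -/
lemma IsSol.ae_integrable [∀ x, IsFiniteMeasure (m x)] (hcl : MeasurableSet (mClosure m Ω))
    (hc : 0 < c) (hf : ∀ s, 0 ≤ s → 0 < f s) (hz : IsSol m ν Ω c f z) :
    ∀ᵐ x ∂ν.restrict Ω, Integrable z (m x) := by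
  filter_upwards [ae_restrict_of_ae (hz.nonneg_ae hcl), hz.2.2] with x hx0 hx
  refine integrable_of_deltaM_ne_zero fun h => ?_
  have := mul_pos hc (hf _ hx0)
  rw [h, neg_zero] at hx
  linarith

lemma IsSol.isGelfandFixedPt [∀ x, IsProbabilityMeasure (m x)]
    (hcl : MeasurableSet (mClosure m Ω)) (hc : 0 < c) (hf : ∀ s, 0 ≤ s → 0 < f s)
    (hz : IsSol m ν Ω c f z) : IsGelfandFixedPt m ν Ω c f z := by
  filter_upwards [hz.ae_integrable hcl hc hf, hz.2.2] with x hxi hx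
  rw [deltaM_eq_integral_sub hxi] at hx
  rw [gelfandStep]
  linarith

lemma IsSol.isGelfandSupersol [∀ x, IsProbabilityMeasure (m x)]
    (hcl : MeasurableSet (mClosure m Ω)) {c' : ℝ} (hc' : 0 < c') (hcc' : c ≤ c')
    (hf : ∀ s, 0 ≤ s → 0 < f s) (hz : IsSol m ν Ω c' f z) : IsGelfandSupersol m ν Ω c f z :=
  (hz.isGelfandFixedPt hcl hc' hf).isGelfandSupersol (hz.nonneg_ae hcl)
    (hz.ae_integrable hcl hc' hf) hcc' fun s hs => (hf s hs).le

/-- Since `z(x) ≥ c f(z(x)) ≥ κ f(z(x))`, the value `z(x)` cannot lie where `s < κ f(s)`. -/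
lemma IsSol.ae_le_of_lt_mul [∀ x, IsProbabilityMeasure (m x)] (hnp : NullPreservingOn m ν Ω)
    (hcl : MeasurableSet (mClosure m Ω)) (hc : 0 < c) (hf : ∀ s, 0 ≤ s → 0 < f s)
    (hz : IsSol m ν Ω c f z) {κ s₀ : ℝ} (hκc : κ ≤ c) (hs₀ : ∀ s, s₀ < s → s < κ * f s) :
    ∀ᵐ x ∂ν.restrict Ω, z x ≤ s₀ := by
  filter_upwards [hz.isGelfandFixedPt hcl hc hf, hnp.ae_ae (hz.nonneg_ae hcl),
    ae_restrict_of_ae (hz.nonneg_ae hcl)] with x hx hxm hx0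
  by_contra! hlt
  have h1 := hs₀ _ hlt
  have h2 : κ * f (z x) ≤ c * f (z x) := by gcongr; exact (hf _ hx0).le
  have h3 : 0 ≤ ∫ y, z y ∂m x := integral_nonneg_of_ae hxm
  rw [gelfandStep] at hx
  linarith

lemma IsAdmissible.isSol [∀ x, IsProbabilityMeasure (m x)]
    (hbdry : MeasurableSet (mBoundary m Ω)) (hfin : ν (mClosure m Ω) ≠ ⊤) {C : ℝ}
    (hz : IsAdmissible Ω C z) (hfix : IsGelfandFixedPt m ν Ω c f z) : IsSol m ν Ω c f z := by
  have : IsFiniteMeasure (ν.restrict (mClosure m Ω)) := isFiniteMeasure_restrict.mpr hfin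
  refine ⟨⟨hz.measurable, ?_, ?_, fun x hx => hz.eq_zero_of_notMem x fun h => hx (Or.inl h)⟩,
    ae_of_all _ hz.nonneg, ?_⟩
  · exact MemLp.of_bound hz.measurable.aestronglyMeasurable C (ae_of_all _ hz.abs_le)
  · exact (ae_restrict_iff' hbdry).mpr (ae_of_all _ fun x hx => hz.eq_zero_of_notMem x hx.1)
  · filter_upwards [hfix] with x hx
    rw [deltaM_eq_integral_sub (hz.integrable _)]
    rw [gelfandStep] at hx
    linarith

lemma lamStar_nonneg : 0 ≤ lamStar m ν Ω f :=
  Real.sSup_nonneg fun _ h => h.1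

lemma exists_isSol_of_lt_lamStar (h : c < lamStar m ν Ω f) :
    ∃ c', c < c' ∧ ∃ z, IsSol m ν Ω c' f z := by
  have h0 : (0 : ℝ) ∈ {c | 0 ≤ c ∧ ∃ u : X → ℝ, IsSol m ν Ω c f u ∧ IsBdd ν (mClosure m Ω) u} :=
    ⟨le_rfl, 0, isSol_zero, 0, ae_of_all _ fun _ => by simp⟩
  obtain ⟨c', ⟨-, z, hz, -⟩, hcc'⟩ := exists_lt_of_lt_csSup ⟨0, h0⟩ h
  exact ⟨c', hcc', z, hz⟩

lemma exists_minimal_isGelfandFixedPt_of_lt_lamStar (hrw : IsRandomWalk m)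
    (hnp : NullPreservingOn m ν Ω) (hΩ : MeasurableSet Ω) (hfc : ContinuousOn f (Ici 0))
    (hfm : MonotoneOn f (Ici 0)) (hf : ∀ s, 0 ≤ s → 0 < f s) (hc : 0 < c)
    (hcS : c < lamStar m ν Ω f) {κ s₀ : ℝ} (hκc : κ ≤ c) (hs₀ : 0 ≤ s₀)
    (hκ : ∀ s, s₀ < s → s < κ * f s) :
    ∃ U, IsAdmissible Ω s₀ U ∧ IsGelfandFixedPt m ν Ω c f U ∧
      ∀ z, IsGelfandSupersol m ν Ω c f z → U ≤ᵐ[ν] z := by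
  have := hrw.1
  have hcl := hrw.measurableSet_mClosure hΩ
  obtain ⟨c', hcc', z, hz⟩ := exists_isSol_of_lt_lamStar hcS
  have hc' := hc.trans hcc'
  exact exists_minimal_isGelfandFixedPt hrw.measurable hnp hΩ hc.le hfc hfm (hf 0 le_rfl).le hs₀
    (hz.isGelfandSupersol hcl hc' hcc'.le hf)
    (hz.ae_le_of_lt_mul hnp hcl hc' hf (hκc.trans hcc'.le) hκ)

end Solutions

lemma exists_lt_mul_of_tendsto_div_atTop {f : ℝ → ℝ}
    (hf : Tendsto (fun s => f s / s) atTop atTop) {κ : ℝ} (hκ : 0 < κ) :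
    ∃ s₀, 0 ≤ s₀ ∧ ∀ s, s₀ < s → s < κ * f s := by
  obtain ⟨s₁, hs₁⟩ := eventually_atTop.mp (hf.eventually_gt_atTop κ⁻¹)
  refine ⟨max s₁ 0, le_max_right _ _, fun s hs => ?_⟩
  have hs0 : 0 < s := (le_max_right _ _).trans_lt hs
  have h := (lt_div_iff₀ hs0).mp (hs₁ s ((le_max_left _ _).trans hs.le))
  calc s = κ * (κ⁻¹ * s) := by field_simp
    _ < κ * f s := by gcongr

theorem extremal_solution_existence_general
    {X : Type*} [MeasurableSpace X]
    (m : X → MeasureTheory.Measure X) (ν : MeasureTheory.Measure X)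
    (Ω : Set X) (lam : ℝ) (φ : X → ℝ) (α M : ℝ)
    (hst : Standing m ν Ω lam φ α M)
    (f : ℝ → ℝ) (hC1 : ContDiffOn ℝ 1 f (Set.Ici 0))
    (hmono : MonotoneOn f (Set.Ici 0)) (hf0 : 0 < f 0)
    (hsup : Filter.Tendsto (fun s => f s / s) Filter.atTop Filter.atTop) :
    ∃ u : X → ℝ, IsMinimalSol m ν Ω (lamStar m ν Ω f) f u ∧ IsBdd ν (mClosure m Ω) u := by
  have := hst.hrw.1
  have hcl := hst.hrw.measurableSet_mClosure hst.hmeasΩ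
  have hnp : NullPreservingOn m ν Ω := hst.hrev.nullPreservingOn hst.hrw hst.hmeasΩ
    (measure_lt_top_of_subset subset_union_left hst.hfin.ne).ne
  have hf : ∀ s, 0 ≤ s → 0 < f s := fun s hs => hf0.trans_le (hmono self_mem_Ici hs hs)
  -- `lamStar` is `0` also when the parameter set is unbounded (junk value of `sSup`)
  rcases (lamStar_nonneg (m := m) (ν := ν) (Ω := Ω) (f := f)).eq_or_lt with h0 | hpos
  · exact ⟨0, h0 ▸ isMinimalSol_zero, 0, ae_of_all _ fun _ => by simp⟩
  obtain ⟨s₀, hs₀, hκ⟩ := exists_lt_mul_of_tendsto_div_atTop hsup (half_pos hpos)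
  obtain ⟨c, hcmono, hcmem, hclim⟩ := exists_seq_strictMono_tendsto' (half_lt_self hpos)
  choose U hU hUfix hUmin using fun n =>
    exists_minimal_isGelfandFixedPt_of_lt_lamStar hst.hrw hnp hst.hmeasΩ hC1.continuousOn hmono
      hf ((half_pos hpos).trans (hcmem n).1) (hcmem n).2 (hcmem n).1.le hs₀ hκ
  have hUmono : ∀ n, U n ≤ᵐ[ν] U (n + 1) := fun n =>
    hUmin n _ ((hUfix (n + 1)).isGelfandSupersol (ae_of_all _ (hU _).nonneg)
      (ae_of_all _ fun _ => (hU _).integrable _) (hcmono.monotone n.le_succ)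
      fun s hs => (hf s hs).le)
  have hW := IsAdmissible.iSup hU
  refine ⟨_, ⟨hW.isSol (hst.hrw.measurableSet_mBoundary hst.hmeasΩ) hst.hfin.ne
    (isGelfandFixedPt_iSup hnp hC1.continuousOn hclim hU hUmono hUfix), fun v hv => ?_⟩,
    s₀, ae_of_all _ hW.abs_le⟩
  exact ae_restrict_of_ae (ae_iSup_le fun n => hUmin n v
    (hv.isGelfandSupersol hcl hpos (hcmem n).2.le hf))

/-- **Existence of the extremal solution**: if `f ∈ C¹([0,∞))` is strictly convex, increasing,
with `f(0) > 0` and superlinear at infinity, then `(P(λ* f))` admits a bounded minimal solution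
`u*` (the extremal solution), where `λ*` is the extremal parameter. -/
theorem extremal_solution_existence
    {X : Type*} [MeasurableSpace X] [MeasurableSpace.CountablyGenerated X]
    (m : X → MeasureTheory.Measure X) (ν : MeasureTheory.Measure X)
    (Ω : Set X) (lam : ℝ) (φ : X → ℝ) (α M : ℝ)
    (hst : Standing m ν Ω lam φ α M)
    (f : ℝ → ℝ) (hC1 : ContDiffOn ℝ 1 f (Set.Ici 0))
    (hconv : StrictConvexOn ℝ (Set.Ici 0) f)
    (hmono : MonotoneOn f (Set.Ici 0)) (hf0 : 0 < f 0)
    (hsup : Filter.Tendsto (fun s => f s / s) Filter.atTop Filter.atTop) :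
    ∃ u : X → ℝ, IsMinimalSol m ν Ω (lamStar m ν Ω f) f u ∧ IsBdd ν (mClosure m Ω) u :=
  extremal_solution_existence_general m ν Ω lam φ α M hst f hC1 hmono hf0 hsup
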